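/- Let A, B be positive definite matrices. Then the matrix geometric mean satisfies the arithmetic–geometric mean inequality A # B ≤ (A + B)/2 in the Loewner order. -/

import Mathlib

open Matrix

open scoped ComplexOrder in
/-- The positive semidefinite square root (removed from Mathlib; old definition restored). -/
noncomputable def Matrix.PosSemidef.sqrt {n 𝕜 : Type*} [Fintype n] [DecidableEq n] [RCLike 𝕜]
    {A : Matrix n n 𝕜} (hA : A.PosSemidef) : Matrix n n 𝕜 :=
  hA.1.eigenvectorUnitary.1 * diagonal ((↑) ∘ (√·) ∘ hA.1.eigenvalues) *
    (star hA.1.eigenvectorUnitary : Matrix n n 𝕜)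

lemma Matrix.PosSemidef.posSemidef_sqrt {n : Type*} [Fintype n] [DecidableEq n]
    {A : Matrix n n ℝ} (hA : A.PosSemidef) : hA.sqrt.PosSemidef := by
  have hD : (diagonal ((↑) ∘ (√·) ∘ hA.1.eigenvalues) : Matrix n n ℝ).PosSemidef := by
    rw [posSemidef_diagonal_iff]
    intro i
    simp [Real.sqrt_nonneg]
  have := hD.mul_mul_conjTranspose_same (hA.1.eigenvectorUnitary.1)
  rw [Matrix.PosSemidef.sqrt, ← star_eq_conjTranspose] at *
  exact this

lemma Matrix.PosSemidef.sqrt_mul_self {n : Type*} [Fintype n] [DecidableEq n]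
    {A : Matrix n n ℝ} (hA : A.PosSemidef) : hA.sqrt * hA.sqrt = A := by
  set U := hA.1.eigenvectorUnitary
  have hU : (star U : Matrix n n ℝ) * U.1 = 1 := Unitary.coe_star_mul_self U
  have hDD : (diagonal ((↑) ∘ (√·) ∘ hA.1.eigenvalues) : Matrix n n ℝ) *
      diagonal ((↑) ∘ (√·) ∘ hA.1.eigenvalues) = diagonal (RCLike.ofReal ∘ hA.1.eigenvalues) := by
    rw [diagonal_mul_diagonal]
    congr 1
    funext i
    simp [Real.mul_self_sqrt (hA.eigenvalues_nonneg i)]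
  conv_rhs => rw [hA.1.spectral_theorem, Unitary.conjStarAlgAut_apply]
  rw [Matrix.PosSemidef.sqrt]
  calc _ = U.1 * diagonal ((↑) ∘ (√·) ∘ hA.1.eigenvalues) * ((star U : Matrix n n ℝ) * U.1) *
        diagonal ((↑) ∘ (√·) ∘ hA.1.eigenvalues) * (star U : Matrix n n ℝ) := by
          simp only [Matrix.mul_assoc]; rfl
    _ = _ := by rw [hU, Matrix.mul_one, Matrix.mul_assoc U.1, hDD]

/-- The matrix geometric mean `A # B = √A · √(A^{-1/2} B A^{-1/2}) · √A`
of two positive definite real matrices. -/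
noncomputable def geomMean {m : ℕ} (A B : Matrix (Fin m) (Fin m) ℝ)
    (hA : A.PosDef) (hB : B.PosDef) : Matrix (Fin m) (Fin m) ℝ :=
  hA.posSemidef.sqrt *
    (hB.posSemidef.mul_mul_conjTranspose_same (hA.posSemidef.sqrt)⁻¹).sqrt *
    hA.posSemidef.sqrt

lemma posSemidef_smul_nonneg {n : ℕ} {M : Matrix (Fin n) (Fin n) ℝ}
    (hM : M.PosSemidef) {c : ℝ} (hc : 0 ≤ c) : (c • M).PosSemidef := by
  refine ⟨by rw [IsHermitian, conjTranspose_smul, hM.1]; simp, fun x => ?_⟩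
  exact (hM.smul hc).2 x

theorem geomMean_le_arithMean {m : ℕ} (A B : Matrix (Fin m) (Fin m) ℝ)
    (hA : A.PosDef) (hB : B.PosDef) :
    ((1/2 : ℝ) • (A + B) - geomMean A B hA hB).PosSemidef := by
  set S := hA.posSemidef.sqrt with hSdef
  have hSpsd : S.PosSemidef := hA.posSemidef.posSemidef_sqrt
  have hSS : S * S = A := hA.posSemidef.sqrt_mul_self
  have hSH : Sᴴ = S := hSpsd.1
  have hSdet : IsUnit S.det := by
    have h1 : S.det * S.det = A.det := by rw [← det_mul, hSS]
    have hApos := hA.det_pos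
    have : S.det ≠ 0 := by intro h; rw [h, mul_zero] at h1; linarith
    exact this.isUnit
  have hSinv : S⁻¹ * S = 1 := nonsing_inv_mul S hSdet
  have hSinv' : S * S⁻¹ = 1 := mul_nonsing_inv S hSdet
  have hSinvH : (S⁻¹)ᴴ = S⁻¹ := by rw [conjTranspose_nonsing_inv, hSH]
  set C := S⁻¹ * B * (S⁻¹)ᴴ with hCdef
  have hCpsd : C.PosSemidef := hB.posSemidef.mul_mul_conjTranspose_same (S⁻¹)
  set R := hCpsd.sqrt with hRdef
  have hRpsd : R.PosSemidef := hCpsd.posSemidef_sqrt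
  have hRH : Rᴴ = R := hRpsd.1
  have hRR : R * R = C := hCpsd.sqrt_mul_self
  have hSCS : S * C * S = B := by
    rw [hCdef, hSinvH]
    calc S * (S⁻¹ * B * S⁻¹) * S = (S * S⁻¹) * B * (S⁻¹ * S) := by
          simp only [Matrix.mul_assoc]
      _ = B := by rw [hSinv, hSinv']; simp
  have hG : geomMean A B hA hB = S * R * S := rfl
  have key : (1/2 : ℝ) • (A + B) - geomMean A B hA hB
      = (1/2 : ℝ) • (((1 - R) * S)ᴴ * ((1 - R) * S)) := by
    have hexp : ((1 - R) * S)ᴴ * ((1 - R) * S)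
        = A + B - (S * R * S + S * R * S) := by
      rw [conjTranspose_mul, conjTranspose_sub, conjTranspose_one, hRH, hSH]
      have : S * (1 - R) * ((1 - R) * S)
          = S * S - S * R * S - S * R * S + S * (R * R) * S := by
        noncomm_ring
      rw [this, hRR, hSS, hSCS]
      abel
    rw [hG, hexp, smul_sub]
    rw [smul_add (1/2 : ℝ) (S * R * S) (S * R * S)]
    module
  rw [key]
  exact posSemidef_smul_nonneg (posSemidef_conjTranspose_mul_self _) (by norm_num)
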